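/- arXiv:0903.2000 — 2 statements merged into one kernel-verified Lean document; each statement's English description precedes it below -/
import Mathlib

section
/- Let V and E be finite types with maps s, r : E → V and adjacency matrix A, and let ρ be a permutation of V which is a single cycle whose support is all of V (ρ is a cycle and has no fixed points). Then every circuit configuration D with induced permutation ρ_D = ρ satisfies c(D) = 1, and the number of circuit configurations D with ρ_D = ρ equals ∏_{v ∈ V} A v (ρ v). -/
open scoped Classical

/-- The adjacency matrix of the finite directed multigraph with vertices `V`, edges `E`,
source map `s` and range map `r`: the `(v, w)` entry is the number of edges from `v` to `w`. -/
noncomputable def adjMatrix {V E : Type*} (s r : E → V) : Matrix V V ℤ :=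
  Matrix.of fun v w => (Nat.card {e : E // s e = v ∧ r e = w} : ℤ)

/-- A circuit configuration: a finset of edges on which `s` and `r` are injective and
whose `s`-image equals its `r`-image.  Such finsets are precisely the unions of the
circuits of vertex-disjoint sets of directed circuits. -/
def IsCircuitConfig {V E : Type*} [DecidableEq V] (s r : E → V) (D : Finset E) : Prop :=
  Set.InjOn s ↑D ∧ Set.InjOn r ↑D ∧ D.image s = D.image r

/-- `ρ` is the permutation induced by the finset of edges `D`: it sends `s e` to `r e`
for each `e ∈ D` and fixes every vertex outside the `s`-image of `D`. -/
def Induces {V E : Type*} [DecidableEq V] (s r : E → V) (D : Finset E)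
    (ρ : Equiv.Perm V) : Prop :=
  (∀ e ∈ D, ρ (s e) = r e) ∧ ∀ v ∉ D.image s, ρ v = v

/-- The permutation induced by a circuit configuration `D` (the identity if no
permutation is induced by `D`). -/
noncomputable def inducedPerm {V E : Type*} [DecidableEq V] (s r : E → V)
    (D : Finset E) : Equiv.Perm V :=
  if h : ∃ ρ : Equiv.Perm V, Induces s r D ρ then h.choose else 1

/-- The setoid on `V` whose classes are the orbits of the permutation `ρ`. -/
def sameCycleSetoid {V : Type*} (ρ : Equiv.Perm V) : Setoid V where
  r := ρ.SameCycle
  iseqv := ⟨fun x => Equiv.Perm.SameCycle.refl ρ x,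
    Equiv.Perm.SameCycle.symm, Equiv.Perm.SameCycle.trans⟩

/-- The number of circuits of a configuration `D` with induced permutation `ρ`:
the number of orbits of `ρ` that meet the `s`-image of `D`. -/
noncomputable def numCircuits {V E : Type*} (s : E → V) (D : Finset E)
    (ρ : Equiv.Perm V) : ℕ :=
  (Quotient.mk (sameCycleSetoid ρ) '' (s '' ↑D)).ncard

/-!
A configuration `D` inducing a fixed-point-free `ρ` has every vertex in its `s`-image, so,
`s` being injective on `D`, it holds exactly one edge out of each vertex `v`, and that edge
ends at `ρ v`. Conversely any choice of one edge `v → ρ v` for every `v` is a circuit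
configuration inducing `ρ`. Hence these configurations are in bijection with
`∀ v, {e // s e = v ∧ r e = ρ v}`, whose cardinality is `∏ v, A v (ρ v)`. As `ρ` is a
single cycle through all vertices, they all lie in one orbit and `c(D) = 1`.
-/

theorem numCircuits_eq_one_of_isCycle {V E : Type*} {s : E → V} {D : Finset E}
    {ρ : Equiv.Perm V} (hc : ρ.IsCycle) (hne : (s '' ↑D).Nonempty)
    (hmoved : ∀ v ∈ s '' ↑D, ρ v ≠ v) : numCircuits s D ρ = 1 := by
  obtain ⟨v₀, hv₀⟩ := hne
  refine Set.ncard_eq_one.mpr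
    ⟨Quotient.mk _ v₀, Set.eq_singleton_iff_unique_mem.mpr ⟨?_, ?_⟩⟩
  · exact ⟨v₀, hv₀, rfl⟩
  · rintro _ ⟨v, hv, rfl⟩
    exact Quotient.sound (hc.sameCycle (hmoved v hv) (hmoved v₀ hv₀))

section

variable {V E : Type*} [Fintype V] {s r : E → V} {ρ : Equiv.Perm V}

def selectedEdges (f : ∀ v, {e : E // s e = v ∧ r e = ρ v}) : Finset E :=
  Finset.univ.map
    ⟨fun v => f v, fun v w h => (f v).2.1.symm.trans ((congrArg s h).trans (f w).2.1)⟩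

theorem mem_selectedEdges {f : ∀ v, {e : E // s e = v ∧ r e = ρ v}} {e : E} :
    e ∈ selectedEdges f ↔ ∃ v, (f v : E) = e := by
  simp only [selectedEdges, Finset.mem_map, Finset.mem_univ, true_and]
  rfl

theorem selectedEdges_injective :
    Function.Injective
      (selectedEdges : (∀ v, {e : E // s e = v ∧ r e = ρ v}) → Finset E) := by
  intro f g hfg
  funext v
  obtain ⟨w, hw⟩ := mem_selectedEdges.mp (hfg ▸ mem_selectedEdges.mpr ⟨v, rfl⟩)
  have hwv : w = v := by rw [← (g w).2.1, hw, (f v).2.1]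
  exact Subtype.ext (hwv ▸ hw).symm

variable [DecidableEq V]

theorem image_selectedEdges_eq_univ (f : ∀ v, {e : E // s e = v ∧ r e = ρ v}) {g : E → V}
    (hg : ∀ v, ∃ w, g (f w) = v) : (selectedEdges f).image g = Finset.univ :=
  Finset.eq_univ_of_forall fun v =>
    let ⟨w, hw⟩ := hg v
    Finset.mem_image.mpr ⟨f w, mem_selectedEdges.mpr ⟨w, rfl⟩, hw⟩

theorem induces_selectedEdges (f : ∀ v, {e : E // s e = v ∧ r e = ρ v}) :
    Induces s r (selectedEdges f) ρ := by
  refine ⟨fun e he => ?_, fun v hv => ?_⟩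
  · obtain ⟨v, rfl⟩ := mem_selectedEdges.mp he
    rw [(f v).2.1, (f v).2.2]
  · rw [image_selectedEdges_eq_univ f fun v => ⟨v, (f v).2.1⟩] at hv
    exact absurd (Finset.mem_univ v) hv

theorem isCircuitConfig_selectedEdges (f : ∀ v, {e : E // s e = v ∧ r e = ρ v}) :
    IsCircuitConfig s r (selectedEdges f) := by
  refine ⟨?_, ?_, ?_⟩
  · rintro _ he₁ _ he₂ h
    obtain ⟨v₁, rfl⟩ := mem_selectedEdges.mp he₁
    obtain ⟨v₂, rfl⟩ := mem_selectedEdges.mp he₂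
    rw [(f v₁).2.1, (f v₂).2.1] at h
    rw [h]
  · rintro _ he₁ _ he₂ h
    obtain ⟨v₁, rfl⟩ := mem_selectedEdges.mp he₁
    obtain ⟨v₂, rfl⟩ := mem_selectedEdges.mp he₂
    rw [(f v₁).2.2, (f v₂).2.2] at h
    rw [ρ.injective h]
  · have hr : ∀ v, ∃ w, r (f w) = v := fun v =>
      ⟨ρ.symm v, by rw [(f _).2.2, ρ.apply_symm_apply]⟩
    rw [image_selectedEdges_eq_univ f fun v => ⟨v, (f v).2.1⟩, image_selectedEdges_eq_univ f hr]

end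

section

variable {V E : Type*} [DecidableEq V] {s r : E → V} {D : Finset E} {ρ : Equiv.Perm V}

theorem Induces.unique {ρ' : Equiv.Perm V} (h : Induces s r D ρ) (h' : Induces s r D ρ') :
    ρ = ρ' := by
  ext v
  by_cases hv : v ∈ D.image s
  · obtain ⟨e, he, rfl⟩ := Finset.mem_image.mp hv
    rw [h.1 e he, h'.1 e he]
  · rw [h.2 v hv, h'.2 v hv]

theorem inducedPerm_eq_iff (hρ : ρ ≠ 1) : inducedPerm s r D = ρ ↔ Induces s r D ρ := by
  unfold inducedPerm
  split_ifs with hex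
  · exact ⟨fun h => h ▸ hex.choose_spec, hex.choose_spec.unique⟩
  · exact ⟨fun h => absurd h.symm hρ, fun h => absurd ⟨ρ, h⟩ hex⟩

variable [Fintype V]

theorem Induces.image_eq_univ (h : Induces s r D ρ) (hfix : ∀ v, ρ v ≠ v) :
    D.image s = Finset.univ :=
  Finset.eq_univ_of_forall fun v => by_contra fun hv => hfix v (h.2 v hv)

theorem Induces.exists_selectedEdges_eq (h : Induces s r D ρ) (hs : Set.InjOn s ↑D)
    (hfix : ∀ v, ρ v ≠ v) :
    ∃ f : ∀ v, {e : E // s e = v ∧ r e = ρ v}, selectedEdges f = D := by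
  have hsurj : ∀ v, ∃ e ∈ D, s e = v := fun v =>
    Finset.mem_image.mp (h.image_eq_univ hfix ▸ Finset.mem_univ v)
  choose edge hedge hsedge using hsurj
  refine ⟨fun v => ⟨edge v, hsedge v, by rw [← h.1 _ (hedge v), hsedge v]⟩, ?_⟩
  ext e
  refine ⟨fun he => ?_, fun he => mem_selectedEdges.mpr ⟨s e, hs (hedge _) he (hsedge _)⟩⟩
  obtain ⟨v, rfl⟩ := mem_selectedEdges.mp he
  exact hedge v

theorem card_circuitConfigs_inducing [Fintype E] (hfix : ∀ v, ρ v ≠ v) :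
    (Finset.univ.filter fun D : Finset E => IsCircuitConfig s r D ∧ Induces s r D ρ).card =
      ∏ v, Nat.card {e : E // s e = v ∧ r e = ρ v} := by
  have hconfigs : (Finset.univ.filter fun D : Finset E =>
      IsCircuitConfig s r D ∧ Induces s r D ρ) =
        Finset.univ.image (selectedEdges (s := s) (r := r) (ρ := ρ)) := by
    ext D
    simp only [Finset.mem_filter, Finset.mem_univ, true_and, Finset.mem_image]
    exact ⟨fun ⟨hD, h⟩ => h.exists_selectedEdges_eq hD.1 hfix,
      fun ⟨f, hf⟩ => hf ▸ ⟨isCircuitConfig_selectedEdges f, induces_selectedEdges f⟩⟩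
  rw [hconfigs, Finset.card_image_of_injective _ selectedEdges_injective, Finset.card_univ,
    Fintype.card_pi]
  simp only [Nat.card_eq_fintype_card]

end

/-- If `ρ` is a single cycle moving every vertex of `V`, then every circuit configuration
inducing `ρ` consists of a single circuit (`c(D) = 1`), and the number of circuit
configurations inducing `ρ` equals `∏ v, A v (ρ v)`. -/
theorem n_cycle_circuit_configs {V E : Type*} [Fintype V] [Fintype E] [DecidableEq V]
    (s r : E → V) (ρ : Equiv.Perm V) (hc : ρ.IsCycle) (hfix : ∀ v, ρ v ≠ v) :
    (∀ D : Finset E, IsCircuitConfig s r D → inducedPerm s r D = ρ →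
        numCircuits s D ρ = 1) ∧
    ((Finset.univ.filter
        (fun D : Finset E => IsCircuitConfig s r D ∧ inducedPerm s r D = ρ)).card : ℤ) =
      ∏ v : V, adjMatrix s r v (ρ v) := by
  obtain ⟨x, hx, -⟩ := id hc
  have hinduced : ∀ D : Finset E, inducedPerm s r D = ρ ↔ Induces s r D ρ := fun D =>
    inducedPerm_eq_iff fun h => hx (by rw [h, Equiv.Perm.one_apply])
  constructor
  · intro D _ hD
    have hsD : s '' ↑D = Set.univ := by
      rw [← Finset.coe_image, ((hinduced D).mp hD).image_eq_univ hfix, Finset.coe_univ]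
    exact numCircuits_eq_one_of_isCycle hc (hsD ▸ ⟨x, trivial⟩) fun v _ => hfix v
  · simp_rw [hinduced, card_circuitConfigs_inducing hfix, adjMatrix, Matrix.of_apply]
    push_cast
    rfl
end

section
/- (Main Lemma.) Let V and E be finite types with maps s, r : E → V and adjacency matrix A. Then for every permutation ρ of V, the signed elementary product of the matrix 1 − A corresponding to ρ equals the signed count of circuit configurations inducing ρ: sign(ρ) · ∏_{v ∈ V} ((1 − A) v (ρ v)) = Σ_D (−1)^{c(D)}, where the sum ranges over all circuit configurations D with induced permutation ρ_D = ρ. Equivalently, this quantity equals the number of circuit configurations D with ρ_D = ρ and c(D) even, minus the number with ρ_D = ρ and c(D) odd. -/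
open scoped Classical

/-!
Writing `(1 - A) v (ρ v) = [ρ v = v] - #{edges v → ρ v}` and expanding the product over the
set `t` of vertices where the edge count is chosen, only the sets `t ⊇ supp ρ` survive, with
weight `(-1)^|t|` times the number of ways to pick one edge `v → ρ v` for every `v ∈ t`. These
choices are exactly the circuit configurations `D` inducing `ρ` with `s`-image `t`, and `|D| = |t|`.
For the sign, `sign ρ = (-1)^(|supp ρ| + #cycles ρ)`, while the circuits of `D` are the
nontrivial cycles of `ρ` together with one loop at each fixed point of `ρ` in `t`; so
`sign ρ · (-1)^|t| = (-1)^c(D)`.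
-/

open Finset

namespace Finset
variable {α β : Type*} [DecidableEq α] [DecidableEq β]

theorem image_erase_of_injOn {f : α → β} {D : Finset α} (hf : Set.InjOn f D) {a : α}
    (ha : a ∈ D) : (D.erase a).image f = (D.image f).erase (f a) := by
  ext c
  simp only [mem_image, mem_erase]
  constructor
  · rintro ⟨x, ⟨hxa, hx⟩, rfl⟩
    exact ⟨fun h => hxa (hf hx ha h), x, hx, rfl⟩
  · rintro ⟨hc, x, hx, rfl⟩
    exact ⟨x, ⟨by rintro rfl; exact hc rfl, hx⟩, rfl⟩

theorem card_filter_injOn_image_eq_prod (f : α → β) (S : Finset α) (t : Finset β) :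
    #(S.powerset.filter fun D : Finset α => Set.InjOn f ↑D ∧ D.image f = t) =
      ∏ b ∈ t, #{a ∈ S | f a = b} := by
  induction t using Finset.induction_on with
  | empty =>
    rw [prod_empty, card_eq_one]
    exact ⟨∅, eq_singleton_iff_unique_mem.mpr ⟨by simp, by simp⟩⟩
  | insert b t hb ih =>
    rw [prod_insert hb, ← ih, ← card_product, eq_comm]
    refine card_nbij (fun p => insert p.1 p.2) ?_ ?_ ?_
    · rintro ⟨a, D⟩ hp
      simp only [mem_coe, mem_product, mem_filter, mem_powerset] at hp ⊢
      obtain ⟨⟨haS, rfl⟩, hDS, hinj, rfl⟩ := hp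
      have haD : a ∉ D := fun h => hb (mem_image_of_mem f h)
      refine ⟨insert_subset haS hDS, ?_, image_insert _ _ _⟩
      rw [coe_insert, Set.injOn_insert haD]
      exact ⟨hinj, by simpa using hb⟩
    · rintro ⟨a, D⟩ hp ⟨a', D'⟩ hp' h
      simp only [mem_coe, mem_product, mem_filter, mem_powerset] at hp hp' h
      obtain ⟨⟨-, rfl⟩, -, -, rfl⟩ := hp
      obtain ⟨⟨-, hfa'⟩, -, -, hD'⟩ := hp'
      have haD : a ∉ D := fun h => hb (mem_image_of_mem f h)
      have ha'D' : a' ∉ D' := fun h => hb (hfa' ▸ hD' ▸ mem_image_of_mem f h)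
      obtain rfl : a = a' := (mem_insert.mp (h ▸ mem_insert_self a D)).resolve_right
        fun h => hb (hD' ▸ mem_image_of_mem f h)
      rw [← erase_insert haD, h, erase_insert ha'D']
    · intro D hD
      simp only [mem_coe, mem_filter, mem_powerset] at hD
      obtain ⟨hDS, hinj, hD⟩ := hD
      obtain ⟨a, haD, rfl⟩ := mem_image.mp (hD ▸ mem_insert_self b t)
      refine ⟨(a, D.erase a), ?_, insert_erase haD⟩
      simp only [mem_coe, mem_product, mem_filter, mem_powerset]
      exact ⟨⟨hDS haD, trivial⟩, (erase_subset a D).trans hDS, hinj.mono (by simp),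
        by rw [image_erase_of_injOn hinj haD, hD, erase_insert hb]⟩

theorem prod_boole_sub_card_fiber_eq_sum [Fintype β] {R : Type*} [CommRing R] (f : α → β)
    (S : Finset α) (T : Finset β) :
    ∏ b, ((if b ∉ T then 1 else 0) - (#{a ∈ S | f a = b} : R)) =
      ∑ D ∈ S.powerset.filter (fun D : Finset α => Set.InjOn f ↑D ∧ T ⊆ D.image f),
        (-1) ^ #D := by
  have fiber (t : Finset β) :
      ∑ D ∈ S.powerset.filter (fun D : Finset α => Set.InjOn f ↑D ∧ T ⊆ D.image f)
          with D.image f = t, (-1 : R) ^ #D =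
        (-1) ^ #t * (∏ b ∈ univ \ t, if b ∉ T then 1 else 0) *
          ∏ b ∈ t, (#{a ∈ S | f a = b} : R) := by
    have hT : (∀ b ∈ univ \ t, b ∉ T) ↔ T ⊆ t := by
      simp only [mem_sdiff, mem_univ, true_and]
      exact ⟨fun h b hb => by_contra fun hbt => h b hbt hb, fun h b hbt hb => hbt (h hb)⟩
    rw [prod_boole, ← Nat.cast_prod, ← card_filter_injOn_image_eq_prod, filter_filter]
    by_cases hTt : T ⊆ t
    · rw [if_pos (hT.mpr hTt), mul_one, mul_comm, ← nsmul_eq_mul, ← sum_const]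
      refine sum_congr (filter_congr fun D _ => ?_) fun D hD => ?_
      · constructor
        · rintro ⟨⟨hinj, -⟩, rfl⟩; exact ⟨hinj, rfl⟩
        · rintro ⟨hinj, rfl⟩; exact ⟨⟨hinj, hTt⟩, rfl⟩
      · obtain ⟨-, hinj, rfl⟩ := mem_filter.mp hD
        rw [card_image_of_injOn hinj]
    · rw [if_neg (mt hT.mp hTt), mul_zero, zero_mul]
      refine sum_eq_zero fun D hD => absurd ?_ hTt
      obtain ⟨-, ⟨-, hTD⟩, rfl⟩ := mem_filter.mp hD
      exact hTD
  rw [prod_sub, ← sum_fiberwise_of_maps_to (g := fun D : Finset α => D.image f)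
    (t := univ.powerset) (by simp)]
  exact sum_congr rfl fun t _ => (fiber t).symm

theorem sum_neg_one_pow_eq_card_even_sub_card_odd {ι R : Type*} [Ring R] (S : Finset ι)
    (n : ι → ℕ) :
    ∑ i ∈ S, (-1 : R) ^ n i = (#{i ∈ S | Even (n i)} : R) - #{i ∈ S | Odd (n i)} := by
  rw [← sum_filter_add_sum_filter_not S fun i => Even (n i)]
  simp only [Nat.not_even_iff_odd]
  have h_even : ∀ i ∈ S.filter (fun i => Even (n i)), (-1 : R) ^ n i = 1 :=
    fun i hi => (mem_filter.mp hi).2.neg_one_pow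
  have h_odd : ∀ i ∈ S.filter (fun i => Odd (n i)), (-1 : R) ^ n i = -1 :=
    fun i hi => (mem_filter.mp hi).2.neg_one_pow
  rw [sum_congr rfl h_even, sum_congr rfl h_odd, sum_const, sum_const, nsmul_one, smul_neg,
    nsmul_one, sub_eq_add_neg]

end Finset

namespace Equiv.Perm
variable {α : Type*} [Fintype α] [DecidableEq α] (ρ : Perm α)

theorem ncard_image_mk_support :
    (Quotient.mk (sameCycleSetoid ρ) '' ρ.support).ncard = #ρ.cycleFactorsFinset := by
  let F : Quotient (sameCycleSetoid ρ) → Perm α :=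
    Quotient.lift ρ.cycleOf fun _ _ h => h.cycleOf_eq
  have hF : Set.InjOn F (Quotient.mk _ '' ρ.support) := by
    rintro _ ⟨x, hx, rfl⟩ _ ⟨y, hy, rfl⟩ h
    exact Quotient.sound ((sameCycle_iff_cycleOf_eq_of_mem_support hx hy).mpr h)
  have hcycles : ρ.cycleOf '' ρ.support = ρ.cycleFactorsFinset := by
    ext c
    constructor
    · rintro ⟨x, hx, rfl⟩
      exact cycleOf_mem_cycleFactorsFinset_iff.mpr hx
    · intro hc
      obtain ⟨x, hx⟩ := (mem_cycleFactorsFinset_iff.mp hc).1.nonempty_support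
      exact ⟨x, mem_cycleFactorsFinset_support_le hc hx, (cycle_is_cycleOf hx hc).symm⟩
  rw [← hF.ncard_image, Set.image_image, ← Set.ncard_coe_finset]
  exact congrArg Set.ncard hcycles

theorem ncard_image_mk_of_support_subset {t : Finset α} (ht : ρ.support ⊆ t) :
    (Quotient.mk (sameCycleSetoid ρ) '' t).ncard =
      #ρ.cycleFactorsFinset + #(t \ ρ.support) := by
  have hfixed : ∀ x ∈ (↑(t \ ρ.support) : Set α), ρ x = x := fun x hx =>
    notMem_support.mp (mem_sdiff.mp hx).2
  have hinj : Set.InjOn (Quotient.mk (sameCycleSetoid ρ)) ↑(t \ ρ.support) :=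
    fun x hx _ _ h => (Quotient.exact h : ρ.SameCycle x _).eq_of_left (hfixed x hx)
  have hdisj : _root_.Disjoint (Quotient.mk (sameCycleSetoid ρ) '' ρ.support)
      (Quotient.mk (sameCycleSetoid ρ) '' ↑(t \ ρ.support)) := by
    refine Set.disjoint_left.mpr ?_
    rintro _ ⟨x, hx, rfl⟩ ⟨y, hy, h⟩
    have := (Quotient.exact h : ρ.SameCycle y x).eq_of_left (hfixed y hy)
    exact (mem_sdiff.mp hy).2 (this ▸ hx)
  rw [← union_sdiff_of_subset ht, coe_union, Set.image_union, Set.ncard_union_eq hdisj,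
    ncard_image_mk_support, union_sdiff_of_subset ht, hinj.ncard_image,
    Set.ncard_coe_finset]

theorem sign_mul_neg_one_pow_card {t : Finset α} (ht : ρ.support ⊆ t) :
    (sign ρ : ℤ) * (-1) ^ #t = (-1) ^ (Quotient.mk (sameCycleSetoid ρ) '' t).ncard := by
  have hcard : Multiset.card ρ.cycleType = #ρ.cycleFactorsFinset := by
    rw [cycleType_def, Multiset.card_map]; rfl
  rw [ncard_image_mk_of_support_subset ρ ht, sign_of_cycleType, sum_cycleType, hcard,
    ← card_sdiff_add_card_eq_card ht]
  push_cast
  rw [← pow_add, show #ρ.support + #ρ.cycleFactorsFinset + (#(t \ ρ.support) + #ρ.support) =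
    2 * #ρ.support + (#ρ.cycleFactorsFinset + #(t \ ρ.support)) by ring, pow_add, pow_mul]
  simp

end Equiv.Perm

section
variable {V E : Type*} [DecidableEq V] {s r : E → V} {D : Finset E} {ρ : Equiv.Perm V}

theorem Induces.inducedPerm_eq (h : Induces s r D ρ) : inducedPerm s r D = ρ := by
  have hex : ∃ ρ', Induces s r D ρ' := ⟨ρ, h⟩
  rw [inducedPerm, dif_pos hex]
  ext v
  by_cases hv : v ∈ D.image s
  · obtain ⟨e, he, rfl⟩ := mem_image.mp hv
    rw [hex.choose_spec.1 e he, h.1 e he]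
  · rw [hex.choose_spec.2 v hv, h.2 v hv]

theorem IsCircuitConfig.exists_induces (h : IsCircuitConfig s r D) :
    ∃ ρ : Equiv.Perm V, Induces s r D ρ := by
  obtain ⟨hs, hr, him⟩ := h
  have him' : r '' D = s '' D := by rw [← coe_image, ← coe_image, him]
  let σ : Equiv.Perm (s '' D) := (Equiv.Set.imageOfInjOn s _ hs).symm.trans
    ((Equiv.Set.imageOfInjOn r _ hr).trans (Equiv.setCongr him'))
  have hσ : ∀ e (he : e ∈ D), (σ ⟨s e, e, he, rfl⟩ : V) = r e := by
    intro e he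
    have : (Equiv.Set.imageOfInjOn s _ hs).symm ⟨s e, e, he, rfl⟩ = ⟨e, he⟩ :=
      (Equiv.symm_apply_eq _).mpr rfl
    simp only [σ, Equiv.trans_apply, this]
    rfl
  refine ⟨Equiv.Perm.ofSubtype σ, fun e he => ?_, fun v hv => ?_⟩
  · rw [Equiv.Perm.ofSubtype_apply_of_mem σ ⟨e, he, rfl⟩, hσ e he]
  · exact Equiv.Perm.ofSubtype_apply_of_not_mem σ (by simpa using hv)

theorem Induces.support_subset [Fintype V] (h : Induces s r D ρ) : ρ.support ⊆ D.image s :=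
  fun v hv => by_contra fun hvD => Equiv.Perm.mem_support.mp hv (h.2 v hvD)

theorem isCircuitConfig_and_inducedPerm_eq_iff [Fintype V] :
    IsCircuitConfig s r D ∧ inducedPerm s r D = ρ ↔
      (∀ e ∈ D, r e = ρ (s e)) ∧ Set.InjOn s D ∧ ρ.support ⊆ D.image s := by
  constructor
  · rintro ⟨hD, rfl⟩
    obtain ⟨ρ, hρ⟩ := hD.exists_induces
    rw [hρ.inducedPerm_eq]
    exact ⟨fun e he => (hρ.1 e he).symm, hD.1, hρ.support_subset⟩
  · rintro ⟨hr, hs, hsupp⟩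
    have hρ : Induces s r D ρ := ⟨fun e he => (hr e he).symm,
      fun v hv => Equiv.Perm.notMem_support.mp fun hv' => hv (hsupp hv')⟩
    refine ⟨⟨hs, fun e he e' he' h => hs he he' (ρ.injective ?_), ?_⟩, hρ.inducedPerm_eq⟩
    · rwa [← hr e he, ← hr e' he']
    · apply coe_injective
      have hfix : {v | ρ v ≠ v} ⊆ s '' D := fun v hv => by
        simpa using hsupp (Equiv.Perm.mem_support.mpr hv)
      rw [coe_image, coe_image, ← Set.image_perm hfix, Set.image_image]
      exact (Set.image_congr fun e he => hr e he).symm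

theorem sign_mul_neg_one_pow_card_eq_numCircuits [Fintype V] (hs : Set.InjOn s D)
    (hsupp : ρ.support ⊆ D.image s) :
    (Equiv.Perm.sign ρ : ℤ) * (-1) ^ #D = (-1) ^ numCircuits s D ρ := by
  rw [numCircuits, ← coe_image, ← card_image_of_injOn hs]
  exact ρ.sign_mul_neg_one_pow_card hsupp

end

section
variable {V E : Type*} [Fintype V] [Fintype E] [DecidableEq V] (s r : E → V) (ρ : Equiv.Perm V)

theorem one_sub_adjMatrix_apply_perm (v : V) :
    ((1 : Matrix V V ℤ) - adjMatrix s r) v (ρ v) =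
      (if v ∉ ρ.support then 1 else 0) - #{e ∈ {e | r e = ρ (s e)} | s e = v} := by
  rw [Matrix.sub_apply, Matrix.one_apply, adjMatrix, Matrix.of_apply, Nat.card_eq_fintype_card,
    Fintype.card_subtype, filter_filter]
  congr 1
  · exact if_congr (by rw [Equiv.Perm.notMem_support, eq_comm]) rfl rfl
  · congr 2
    exact filter_congr fun e _ =>
      ⟨fun ⟨h₁, h₂⟩ => ⟨h₁ ▸ h₂, h₁⟩, fun ⟨h₁, h₂⟩ => ⟨h₂, h₂ ▸ h₁⟩⟩

theorem filter_isCircuitConfig_inducedPerm_eq :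
    ({D | IsCircuitConfig s r D ∧ inducedPerm s r D = ρ} : Finset (Finset E)) =
      ({e | r e = ρ (s e)} : Finset E).powerset.filter
        fun D : Finset E => Set.InjOn s ↑D ∧ ρ.support ⊆ D.image s := by
  ext D
  simp only [mem_filter, mem_univ, true_and, mem_powerset, subset_iff (s₁ := D),
    isCircuitConfig_and_inducedPerm_eq_iff]

theorem sign_mul_prod_one_sub_adjMatrix_eq_sum :
    (Equiv.Perm.sign ρ : ℤ) * ∏ v : V, ((1 : Matrix V V ℤ) - adjMatrix s r) v (ρ v) =
      ∑ D ∈ Finset.univ.filter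
          (fun D : Finset E => IsCircuitConfig s r D ∧ inducedPerm s r D = ρ),
        (-1 : ℤ) ^ numCircuits s D ρ := by
  rw [Fintype.prod_congr _ _ (one_sub_adjMatrix_apply_perm s r ρ),
    prod_boole_sub_card_fiber_eq_sum, filter_isCircuitConfig_inducedPerm_eq, mul_sum]
  refine sum_congr rfl fun D hD => ?_
  obtain ⟨-, hs, hsupp⟩ := mem_filter.mp hD
  exact sign_mul_neg_one_pow_card_eq_numCircuits hs hsupp

end

/-- Main lemma: for every permutation `ρ` of the vertices, the signed elementary product
of `1 - A` corresponding to `ρ` equals `∑ D, (-1) ^ c(D)` over circuit configurations `D`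
inducing `ρ`; equivalently, it equals the number of such configurations with an even
number of circuits minus the number with an odd number of circuits. -/
theorem signed_elementary_product_eq_signed_count {V E : Type*} [Fintype V] [Fintype E]
    [DecidableEq V] (s r : E → V) (ρ : Equiv.Perm V) :
    ((Equiv.Perm.sign ρ : ℤ) *
        ∏ v : V, ((1 : Matrix V V ℤ) - adjMatrix s r) v (ρ v) =
      ∑ D ∈ Finset.univ.filter
          (fun D : Finset E => IsCircuitConfig s r D ∧ inducedPerm s r D = ρ),
        (-1 : ℤ) ^ numCircuits s D ρ) ∧
    ((Equiv.Perm.sign ρ : ℤ) *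
        ∏ v : V, ((1 : Matrix V V ℤ) - adjMatrix s r) v (ρ v) =
      ((Finset.univ.filter (fun D : Finset E =>
          IsCircuitConfig s r D ∧ inducedPerm s r D = ρ ∧
            Even (numCircuits s D ρ))).card : ℤ) -
      ((Finset.univ.filter (fun D : Finset E =>
          IsCircuitConfig s r D ∧ inducedPerm s r D = ρ ∧
            Odd (numCircuits s D ρ))).card : ℤ)) := by
  refine ⟨sign_mul_prod_one_sub_adjMatrix_eq_sum s r ρ, ?_⟩
  rw [sign_mul_prod_one_sub_adjMatrix_eq_sum, sum_neg_one_pow_eq_card_even_sub_card_odd]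
  simp only [filter_filter, and_assoc]
end
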